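/- arXiv:1404.0948 — 2 statements merged into one kernel-verified Lean document; each statement's English description precedes it below -/
import Mathlib

section
/- Let C be a generalized comparator network on n channels of depth d and size s (total number of comparators) that sorts every binary input. Then there exists a standard comparator network on n channels of depth d and size s that is a sorting network. -/
/-- A layer: a set of comparators `(i,j)` with `i < j`, each channel in at most one comparator. -/
def IsLayer {n : ℕ} (L : Finset (Fin n × Fin n)) : Prop :=
  (∀ c ∈ L, c.1 < c.2) ∧
  (∀ c ∈ L, ∀ c' ∈ L, c ≠ c' →
    c.1 ≠ c'.1 ∧ c.1 ≠ c'.2 ∧ c.2 ≠ c'.1 ∧ c.2 ≠ c'.2)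

/-- Apply one layer to a binary vector: the first channel of a comparator receives the
minimum (`&&`), the second the maximum (`||`). -/
noncomputable def applyLayer {n : ℕ} (L : Finset (Fin n × Fin n)) (x : Fin n → Bool) :
    Fin n → Bool := fun k =>
  if h : ∃ j, (k, j) ∈ L then x k && x h.choose
  else if h' : ∃ i, (i, k) ∈ L then x h'.choose || x k
  else x k

/-- Propagate a binary input through the layers of a network (a list of layers). -/
noncomputable def applyNet {n : ℕ} (N : List (Finset (Fin n × Fin n))) (x : Fin n → Bool) :
    Fin n → Bool :=
  N.foldl (fun v L => applyLayer L v) x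

/-- The set of binary outputs of a network. -/
noncomputable def outputs {n : ℕ} (N : List (Finset (Fin n × Fin n))) : Set (Fin n → Bool) :=
  Set.range (applyNet N)

/-- A network sorts all binary inputs. -/
def Sorts {n : ℕ} (N : List (Finset (Fin n × Fin n))) : Prop :=
  ∀ x : Fin n → Bool, Monotone (applyNet N x)

/-- The first layer `F_n`: comparators `(2k-1, 2k)` (0-indexed: `(2k, 2k+1)`). -/
def Fn (n : ℕ) : Finset (Fin n × Fin n) :=
  Finset.univ.filter (fun c => c.1.val % 2 = 0 ∧ c.2.val = c.1.val + 1)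

/-- A generalized layer: comparators `(i,j)` with `i ≠ j` (possibly `i > j`, ordering its
outputs descendingly), each channel in at most one comparator. -/
def IsGenLayer {n : ℕ} (L : Finset (Fin n × Fin n)) : Prop :=
  (∀ c ∈ L, c.1 ≠ c.2) ∧
  (∀ c ∈ L, ∀ c' ∈ L, c ≠ c' →
    c.1 ≠ c'.1 ∧ c.1 ≠ c'.2 ∧ c.2 ≠ c'.1 ∧ c.2 ≠ c'.2)

/-- The size of a network: the total number of comparators in its layers. -/
def netSize {n : ℕ} (N : List (Finset (Fin n × Fin n))) : ℕ :=
  (N.map Finset.card).sum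

section Untangle
variable {n : ℕ}

def Lmap (σ : Equiv.Perm (Fin n)) (L : Finset (Fin n × Fin n)) : Finset (Fin n × Fin n) :=
  L.image fun c => (σ c.1, σ c.2)

def Vmap (σ : Equiv.Perm (Fin n)) (x : Fin n → Bool) : Fin n → Bool := x ∘ σ.symm

lemma mem_Lmap {σ : Equiv.Perm (Fin n)} {L : Finset (Fin n × Fin n)} {a b : Fin n} :
    (a, b) ∈ Lmap σ L ↔ (σ.symm a, σ.symm b) ∈ L := by
  simp only [Lmap, Finset.mem_image, Prod.mk.injEq]
  constructor
  · rintro ⟨⟨c, d⟩, h, h1, h2⟩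
    subst h1; subst h2; simpa using h
  · intro h
    exact ⟨(σ.symm a, σ.symm b), h, by simp, by simp⟩

lemma fst_unique {L : Finset (Fin n × Fin n)} (hL : IsGenLayer L)
    {a b b' : Fin n} (h : (a, b) ∈ L) (h' : (a, b') ∈ L) : b = b' := by
  by_contra hne
  have hcne : ((a, b) : Fin n × Fin n) ≠ (a, b') := by simp [hne]
  exact (hL.2 _ h _ h' hcne).1 rfl

lemma snd_unique {L : Finset (Fin n × Fin n)} (hL : IsGenLayer L)
    {a a' b : Fin n} (h : (a, b) ∈ L) (h' : (a', b) ∈ L) : a = a' := by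
  by_contra hne
  have hcne : ((a, b) : Fin n × Fin n) ≠ (a', b) := by simp [hne]
  exact (hL.2 _ h _ h' hcne).2.2.2 rfl

lemma not_both {L : Finset (Fin n × Fin n)} (hL : IsGenLayer L)
    {a b c : Fin n} (h : (a, b) ∈ L) (h' : (c, a) ∈ L) : False := by
  rcases eq_or_ne ((a, b) : Fin n × Fin n) (c, a) with he | hne
  · have := hL.1 _ h
    rw [Prod.mk.injEq] at he
    exact this (by simp [he.2])
  · exact (hL.2 _ h _ h' hne).2.1 rfl

lemma Lmap_genLayer (σ : Equiv.Perm (Fin n)) {L : Finset (Fin n × Fin n)}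
    (hL : IsGenLayer L) : IsGenLayer (Lmap σ L) := by
  constructor
  · rintro ⟨a, b⟩ h
    rw [mem_Lmap] at h
    have := hL.1 _ h
    exact fun e => this (congrArg σ.symm e)
  · rintro ⟨a, b⟩ h ⟨c, d⟩ h' hne
    rw [mem_Lmap] at h h'
    have hne' : ((σ.symm a, σ.symm b) : Fin n × Fin n) ≠ (σ.symm c, σ.symm d) := by
      intro e
      rw [Prod.mk.injEq] at e
      exact hne (by simp [σ.symm.injective e.1, σ.symm.injective e.2])
    obtain ⟨h1, h2, h3, h4⟩ := hL.2 _ h _ h' hne'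
    exact ⟨fun e => h1 (congrArg σ.symm e), fun e => h2 (congrArg σ.symm e),
      fun e => h3 (congrArg σ.symm e), fun e => h4 (congrArg σ.symm e)⟩

lemma Lmap_Lmap (τ σ : Equiv.Perm (Fin n)) (L : Finset (Fin n × Fin n)) :
    Lmap τ (Lmap σ L) = Lmap (τ * σ) L := by
  simp only [Lmap, Finset.image_image]
  rfl

lemma Lmap_card (σ : Equiv.Perm (Fin n)) (L : Finset (Fin n × Fin n)) :
    (Lmap σ L).card = L.card := by
  apply Finset.card_image_of_injective
  rintro ⟨a, b⟩ ⟨c, d⟩ h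
  rw [Prod.mk.injEq] at h ⊢
  exact ⟨σ.injective h.1, σ.injective h.2⟩

lemma Vmap_Vmap (τ σ : Equiv.Perm (Fin n)) (x : Fin n → Bool) :
    Vmap τ (Vmap σ x) = Vmap (τ * σ) x := by
  rfl

lemma Vmap_symm_Vmap (σ : Equiv.Perm (Fin n)) (x : Fin n → Bool) :
    Vmap σ.symm (Vmap σ x) = x := by
  funext k; simp [Vmap]

lemma Vmap_one (x : Fin n → Bool) : Vmap 1 x = x := rfl

/-- The involution swapping the two channels of every "reversed" comparator of `M`. -/
noncomputable def tfun (M : Finset (Fin n × Fin n)) (k : Fin n) : Fin n :=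
  if h : ∃ j, (k, j) ∈ M ∧ j < k then h.choose
  else if h2 : ∃ i, (i, k) ∈ M ∧ k < i then h2.choose
  else k

lemma tfun_fst_rev {M : Finset (Fin n × Fin n)} (hM : IsGenLayer M) {a b : Fin n}
    (hab : (a, b) ∈ M) (hba : b < a) : tfun M a = b := by
  have h : ∃ j, (a, j) ∈ M ∧ j < a := ⟨b, hab, hba⟩
  rw [tfun, dif_pos h]
  exact fst_unique hM h.choose_spec.1 hab

lemma tfun_snd_rev {M : Finset (Fin n × Fin n)} (hM : IsGenLayer M) {a b : Fin n}
    (hab : (a, b) ∈ M) (hba : b < a) : tfun M b = a := by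
  have h1 : ¬∃ j, (b, j) ∈ M ∧ j < b := by
    rintro ⟨j, hj, -⟩
    exact not_both hM hj hab
  have h2 : ∃ i, (i, b) ∈ M ∧ b < i := ⟨a, hab, hba⟩
  rw [tfun, dif_neg h1, dif_pos h2]
  exact snd_unique hM h2.choose_spec.1 hab

lemma tfun_fst_std {M : Finset (Fin n × Fin n)} (hM : IsGenLayer M) {a b : Fin n}
    (hab : (a, b) ∈ M) (hba : a < b) : tfun M a = a := by
  have h1 : ¬∃ j, (a, j) ∈ M ∧ j < a := by
    rintro ⟨j, hj, hlt⟩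
    rw [fst_unique hM hj hab] at hlt
    exact absurd hba (not_lt.mpr hlt.le)
  have h2 : ¬∃ i, (i, a) ∈ M ∧ a < i := by
    rintro ⟨i, hi, -⟩
    exact not_both hM hab hi
  rw [tfun, dif_neg h1, dif_neg h2]

lemma tfun_snd_std {M : Finset (Fin n × Fin n)} (hM : IsGenLayer M) {a b : Fin n}
    (hab : (a, b) ∈ M) (hba : a < b) : tfun M b = b := by
  have h1 : ¬∃ j, (b, j) ∈ M ∧ j < b := by
    rintro ⟨j, hj, -⟩
    exact not_both hM hj hab
  have h2 : ¬∃ i, (i, b) ∈ M ∧ b < i := by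
    rintro ⟨i, hi, hlt⟩
    rw [snd_unique hM hi hab] at hlt
    exact absurd hba (not_lt.mpr hlt.le)
  rw [tfun, dif_neg h1, dif_neg h2]

lemma tfun_free {M : Finset (Fin n × Fin n)} {k : Fin n}
    (h1 : ¬∃ j, (k, j) ∈ M) (h2 : ¬∃ i, (i, k) ∈ M) : tfun M k = k := by
  rw [tfun, dif_neg (fun ⟨j, hj, _⟩ => h1 ⟨j, hj⟩), dif_neg (fun ⟨i, hi, _⟩ => h2 ⟨i, hi⟩)]

lemma tfun_invol {M : Finset (Fin n × Fin n)} (hM : IsGenLayer M) :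
    Function.Involutive (tfun M) := by
  intro k
  by_cases hf : ∃ j, (k, j) ∈ M
  · obtain ⟨b, hb⟩ := hf
    have hne : k ≠ b := hM.1 _ hb
    rcases lt_or_gt_of_ne hne with hlt | hgt
    · rw [tfun_fst_std hM hb hlt, tfun_fst_std hM hb hlt]
    · rw [tfun_fst_rev hM hb hgt, tfun_snd_rev hM hb hgt]
  · by_cases hs : ∃ i, (i, k) ∈ M
    · obtain ⟨a, ha⟩ := hs
      have hne : a ≠ k := hM.1 _ ha
      rcases lt_or_gt_of_ne hne with hlt | hgt
      · rw [tfun_snd_std hM ha hlt, tfun_snd_std hM ha hlt]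
      · rw [tfun_snd_rev hM ha hgt, tfun_fst_rev hM ha hgt]
    · rw [tfun_free hf hs, tfun_free hf hs]

noncomputable def tperm (M : Finset (Fin n × Fin n)) : Equiv.Perm (Fin n) :=
  open Classical in
  if h : Function.Involutive (tfun M) then h.toPerm else 1

lemma tperm_apply {M : Finset (Fin n × Fin n)} (hM : IsGenLayer M) (k : Fin n) :
    tperm M k = tfun M k := by
  rw [tperm, dif_pos (tfun_invol hM)]; rfl

lemma tperm_symm {M : Finset (Fin n × Fin n)} (hM : IsGenLayer M) :
    (tperm M).symm = tperm M := by
  rw [tperm, dif_pos (tfun_invol hM)]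
  exact Equiv.ext fun k => rfl

lemma Lmap_tperm_isLayer {M : Finset (Fin n × Fin n)} (hM : IsGenLayer M) :
    IsLayer (Lmap (tperm M) M) := by
  refine ⟨?_, (Lmap_genLayer _ hM).2⟩
  rintro c hc
  rw [Lmap, Finset.mem_image] at hc
  obtain ⟨⟨a, b⟩, hab, rfl⟩ := hc
  have hne : a ≠ b := hM.1 _ hab
  dsimp only
  rcases lt_or_gt_of_ne hne with hlt | hgt
  · rw [tperm_apply hM, tperm_apply hM, tfun_fst_std hM hab hlt, tfun_snd_std hM hab hlt]
    exact hlt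
  · rw [tperm_apply hM, tperm_apply hM, tfun_fst_rev hM hab hgt, tfun_snd_rev hM hab hgt]
    exact hgt

lemma applyLayer_Lmap (σ : Equiv.Perm (Fin n)) {L : Finset (Fin n × Fin n)}
    (hL : IsGenLayer L) (x : Fin n → Bool) :
    applyLayer (Lmap σ L) x = Vmap σ (applyLayer L (Vmap σ.symm x)) := by
  funext k
  have hy : Vmap σ.symm x = x ∘ σ := by
    funext i; simp [Vmap]
  simp only [applyLayer, Vmap, Function.comp_apply, hy]
  by_cases h1 : ∃ j, (k, j) ∈ Lmap σ L
  · have h1' : ∃ j, (σ.symm k, j) ∈ L := by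
      obtain ⟨j, hj⟩ := h1
      exact ⟨σ.symm j, mem_Lmap.mp hj⟩
    rw [dif_pos h1, dif_pos h1']
    have hc1 : (σ.symm k, σ.symm h1.choose) ∈ L := mem_Lmap.mp h1.choose_spec
    have hc2 : σ.symm h1.choose = h1'.choose := fst_unique hL hc1 h1'.choose_spec
    have : h1.choose = σ h1'.choose := by rw [← hc2]; simp
    rw [this]
    simp
  · have h1' : ¬∃ j, (σ.symm k, j) ∈ L := by
      rintro ⟨j, hj⟩
      exact h1 ⟨σ j, mem_Lmap.mpr (by simpa using hj)⟩
    rw [dif_neg h1, dif_neg h1']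
    by_cases h2 : ∃ i, (i, k) ∈ Lmap σ L
    · have h2' : ∃ i, (i, σ.symm k) ∈ L := by
        obtain ⟨i, hi⟩ := h2
        exact ⟨σ.symm i, mem_Lmap.mp hi⟩
      rw [dif_pos h2, dif_pos h2']
      have hc1 : (σ.symm h2.choose, σ.symm k) ∈ L := mem_Lmap.mp h2.choose_spec
      have hc2 : σ.symm h2.choose = h2'.choose := snd_unique hL hc1 h2'.choose_spec
      have : h2.choose = σ h2'.choose := by rw [← hc2]; simp
      rw [this]
      simp
    · have h2' : ¬∃ i, (i, σ.symm k) ∈ L := by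
        rintro ⟨i, hi⟩
        exact h2 ⟨σ i, mem_Lmap.mpr (by simpa using hi)⟩
      rw [dif_neg h2, dif_neg h2']
      simp

lemma applyLayer_tperm {M : Finset (Fin n × Fin n)} (hM : IsGenLayer M) (x : Fin n → Bool) :
    applyLayer M (Vmap (tperm M) x) = applyLayer M x := by
  funext k
  have hv : ∀ i, Vmap (tperm M) x i = x (tfun M i) := by
    intro i
    simp only [Vmap, Function.comp_apply, tperm_symm hM, tperm_apply hM]
  simp only [applyLayer]
  by_cases h1 : ∃ j, (k, j) ∈ M
  · rw [dif_pos h1, dif_pos h1]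
    obtain hspec := h1.choose_spec
    have hne : k ≠ h1.choose := hM.1 _ hspec
    rw [hv, hv]
    rcases lt_or_gt_of_ne hne with hlt | hgt
    · rw [tfun_fst_std hM hspec hlt, tfun_snd_std hM hspec hlt]
    · rw [tfun_fst_rev hM hspec hgt, tfun_snd_rev hM hspec hgt, Bool.and_comm]
  · rw [dif_neg h1, dif_neg h1]
    by_cases h2 : ∃ i, (i, k) ∈ M
    · rw [dif_pos h2, dif_pos h2]
      obtain hspec := h2.choose_spec
      have hne : h2.choose ≠ k := hM.1 _ hspec
      rw [hv, hv]
      rcases lt_or_gt_of_ne hne with hlt | hgt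
      · rw [tfun_fst_std hM hspec hlt, tfun_snd_std hM hspec hlt]
      · rw [tfun_fst_rev hM hspec hgt, tfun_snd_rev hM hspec hgt, Bool.or_comm]
    · rw [dif_neg h2, dif_neg h2, hv, tfun_free h1 h2]

/-- Untangle a generalized network, threading the accumulated channel relabeling. -/
noncomputable def untangle (σ : Equiv.Perm (Fin n)) :
    List (Finset (Fin n × Fin n)) → List (Finset (Fin n × Fin n)) × Equiv.Perm (Fin n)
  | [] => ([], σ)
  | L :: N =>
    let M := Lmap σ L
    let r := untangle (tperm M * σ) N
    (Lmap (tperm M) M :: r.1, r.2)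

lemma untangle_isLayer (N : List (Finset (Fin n × Fin n))) (σ : Equiv.Perm (Fin n))
    (hg : ∀ L ∈ N, IsGenLayer L) :
    ∀ L' ∈ (untangle σ N).1, IsLayer L' := by
  induction N generalizing σ with
  | nil => intro L' h; simp [untangle] at h
  | cons L N ih =>
    intro L' h
    rw [untangle] at h
    rcases List.mem_cons.mp h with rfl | h
    · exact Lmap_tperm_isLayer (Lmap_genLayer σ (hg L (by simp)))
    · exact ih _ (fun L hL => hg L (by simp [hL])) L' h

lemma untangle_length (N : List (Finset (Fin n × Fin n))) (σ : Equiv.Perm (Fin n)) :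
    (untangle σ N).1.length = N.length := by
  induction N generalizing σ with
  | nil => rfl
  | cons L N ih => rw [untangle]; simp [ih]

lemma untangle_size (N : List (Finset (Fin n × Fin n))) (σ : Equiv.Perm (Fin n)) :
    ((untangle σ N).1.map Finset.card).sum = (N.map Finset.card).sum := by
  induction N generalizing σ with
  | nil => rfl
  | cons L N ih => rw [untangle]; simp [ih, Lmap_card]

lemma untangle_apply (N : List (Finset (Fin n × Fin n))) (σ : Equiv.Perm (Fin n))
    (hg : ∀ L ∈ N, IsGenLayer L) (x : Fin n → Bool) :
    applyNet (untangle σ N).1 (Vmap σ x) = Vmap (untangle σ N).2 (applyNet N x) := by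
  induction N generalizing σ x with
  | nil => rfl
  | cons L N ih =>
    have hL : IsGenLayer L := hg L (by simp)
    have hM : IsGenLayer (Lmap σ L) := Lmap_genLayer σ hL
    rw [untangle]
    have step1 : applyNet ((Lmap (tperm (Lmap σ L)) (Lmap σ L)) :: (untangle (tperm (Lmap σ L) * σ) N).1) (Vmap σ x)
        = applyNet (untangle (tperm (Lmap σ L) * σ) N).1
            (applyLayer (Lmap (tperm (Lmap σ L)) (Lmap σ L)) (Vmap σ x)) := rfl
    have step2 : applyLayer (Lmap (tperm (Lmap σ L)) (Lmap σ L)) (Vmap σ x)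
        = Vmap (tperm (Lmap σ L) * σ) (applyLayer L x) := by
      rw [applyLayer_Lmap (tperm (Lmap σ L)) hM, tperm_symm hM, applyLayer_tperm hM,
        applyLayer_Lmap σ hL, Vmap_symm_Vmap, Vmap_Vmap]
    have step3 : applyNet (L :: N) x = applyNet N (applyLayer L x) := rfl
    rw [step3, step1, step2, ih _ (fun L' hL' => hg L' (by simp [hL']))]

/-- The number of `true` entries. -/
def ones (v : Fin n → Bool) : ℕ := (Finset.univ.filter fun i => v i = true).card

lemma ones_comp_perm (ρ : Equiv.Perm (Fin n)) (v : Fin n → Bool) :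
    ones (v ∘ ρ) = ones v := by
  apply Finset.card_equiv ρ
  intro i
  simp

lemma ones_lt {v w : Fin n → Bool} (hv : Monotone v) (hw : Monotone w) (i : Fin n)
    (hvi : v i = true) (hwi : w i = false) : ones w < ones v := by
  have h1 : (Finset.univ.filter fun j => w j = true) ⊆ Finset.Ioi i := by
    intro j hj
    rw [Finset.mem_filter] at hj
    rw [Finset.mem_Ioi]
    by_contra hle
    push_neg at hle
    have := hw hle
    rw [hj.2, hwi] at this
    exact absurd this (by simp)
  have h2 : Finset.Ici i ⊆ (Finset.univ.filter fun j => v j = true) := by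
    intro j hj
    rw [Finset.mem_Ici] at hj
    rw [Finset.mem_filter]
    have := hv hj
    rw [hvi] at this
    refine ⟨Finset.mem_univ _, ?_⟩
    revert this
    cases v j <;> simp
  have h3 : Finset.Ioi i ⊂ Finset.Ici i := by
    rw [Finset.ssubset_iff_of_subset (by intro j hj; rw [Finset.mem_Ioi] at hj; exact Finset.mem_Ici.mpr hj.le)]
    exact ⟨i, Finset.mem_Ici.mpr le_rfl, by simp⟩
  exact lt_of_le_of_lt (Finset.card_le_card h1)
    (lt_of_lt_of_le (Finset.card_lt_card h3) (Finset.card_le_card h2))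

lemma mono_eq_of_ones_eq {v w : Fin n → Bool} (hv : Monotone v) (hw : Monotone w)
    (h : ones v = ones w) : v = w := by
  funext i
  by_contra hne
  cases hvi : v i <;> cases hwi : w i
  · rw [hvi, hwi] at hne; exact hne rfl
  · exact absurd h (by have := ones_lt hw hv i hwi hvi; omega)
  · exact absurd h (by have := ones_lt hv hw i hvi hwi; omega)
  · rw [hvi, hwi] at hne; exact hne rfl

lemma applyLayer_fix {L : Finset (Fin n × Fin n)} (hL : IsLayer L) {v : Fin n → Bool}
    (hv : Monotone v) : applyLayer L v = v := by
  funext k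
  rw [applyLayer]
  split_ifs with h1 h2
  · have hk := hL.1 _ h1.choose_spec
    have this : v k ≤ v h1.choose := hv hk.le
    cases hvk : v k <;> cases hvc : v h1.choose <;> rw [hvc] at this <;> rw [hvk] at this <;>
      revert this <;> decide
  · have hk := hL.1 _ h2.choose_spec
    have this : v h2.choose ≤ v k := hv hk.le
    cases hvk : v h2.choose <;> cases hvc : v k <;> rw [hvc] at this <;> rw [hvk] at this <;>
      revert this <;> decide
  · rfl

lemma applyNet_fix {N : List (Finset (Fin n × Fin n))} (hN : ∀ L ∈ N, IsLayer L)
    {v : Fin n → Bool} (hv : Monotone v) : applyNet N v = v := by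
  induction N with
  | nil => rfl
  | cons L N ih =>
    have : applyNet (L :: N) v = applyNet N (applyLayer L v) := rfl
    rw [this, applyLayer_fix (hN L (by simp)) hv]
    exact ih (fun L' h => hN L' (by simp [h]))

end Untangle

/-- untangling, Exercise 5.3.4.16 of Knuth.
A generalized comparator network of depth `d` and size `s` that sorts every binary input
can be replaced by a standard sorting network of the same depth and size. -/
theorem statement15 (n d s : ℕ) (N : List (Finset (Fin n × Fin n)))
    (hg : ∀ L ∈ N, IsGenLayer L) (hd : N.length = d) (hs : netSize N = s)
    (hsort : Sorts N) :
    ∃ N' : List (Finset (Fin n × Fin n)),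
      (∀ L ∈ N', IsLayer L) ∧ N'.length = d ∧ netSize N' = s ∧ Sorts N' := by
  classical
  subst hd hs
  refine ⟨(untangle 1 N).1, untangle_isLayer N 1 hg, untangle_length N 1, untangle_size N 1, ?_⟩
  have key : ∀ x, applyNet (untangle 1 N).1 x = Vmap (untangle 1 N).2 (applyNet N x) := by
    intro x
    have h := untangle_apply N 1 hg x
    rwa [Vmap_one] at h
  set N' := (untangle 1 N).1 with hN'
  set ρ := (untangle 1 N).2 with hρ
  have fix : ∀ v : Fin n → Bool, Monotone v → (v ∘ ρ) = v := by
    intro v hv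
    have h1 : applyNet N' v = v := applyNet_fix (untangle_isLayer N 1 hg) hv
    rw [key v] at h1
    have h2 : applyNet N v = v ∘ ρ := by
      funext k
      have h3 := congrFun h1 (ρ k)
      simpa [Vmap] using h3
    have hm : Monotone (v ∘ ρ) := h2 ▸ hsort v
    exact mono_eq_of_ones_eq hm hv (ones_comp_perm ρ v)
  intro x
  have hw : Monotone (applyNet N x) := hsort x
  have hfix := fix _ hw
  have h3 : Vmap ρ (applyNet N x) = applyNet N x := by
    funext k
    have h4 := congrFun hfix (ρ.symm k)
    simp only [Function.comp_apply, Equiv.apply_symm_apply] at h4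
    simp only [Vmap, Function.comp_apply]
    exact h4.symm
  rw [key x, h3]
  exact hw
end

section
/- For every n ≥ 2 and every d ≥ 1: if there exists a sorting network on n channels of depth d, then there exists a sorting network on n channels of depth d whose first layer is F_n = {(2k−1,2k) : 1 ≤ k ≤ ⌊n/2⌋}. -/
/-!
Choose a permutation `π` of the channels that carries the comparators of the first layer
onto comparators of `F_n`, and relabel the whole network by `π`. Later layers may then contain
comparators pointing downwards. Such a comparator is turned around by swapping its two
channels in the relabelling, which it cannot detect since it only outputs the minimum and the
maximum; passing the swap on to the later layers untangles the network into a standard one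
whose outputs are those of the original network up to a fixed permutation `σ` of positions.
Both networks leave sorted inputs unchanged, which forces `σ = 1`. Finally, adding comparators
to the first layer of a sorting network keeps it sorting: the new comparators act on disjoint
channels, hence before the old first layer, and the old network sorts whatever it receives.
-/

section Layers

variable {n : ℕ} {L L' : Finset (Fin n × Fin n)}

def channels (L : Finset (Fin n × Fin n)) : Finset (Fin n) :=
  L.image Prod.fst ∪ L.image Prod.snd

lemma mem_channels {k : Fin n} : k ∈ channels L ↔ ∃ c ∈ L, c.1 = k ∨ c.2 = k := by
  simp only [channels, Finset.mem_union, Finset.mem_image]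
  grind

lemma IsLayer.subset (hL : IsLayer L) (h : L' ⊆ L) : IsLayer L' :=
  ⟨fun c hc => hL.1 c (h hc), fun c hc c' hc' hne => hL.2 c (h hc) c' (h hc') hne⟩

lemma IsLayer.eq_of_share (hL : IsLayer L) {c c' : Fin n × Fin n} (hc : c ∈ L) (hc' : c' ∈ L)
    (h : c.1 = c'.1 ∨ c.1 = c'.2 ∨ c.2 = c'.1 ∨ c.2 = c'.2) : c = c' := by
  by_contra hne
  have := hL.2 c hc c' hc' hne
  tauto

lemma applyLayer_fst (hL : IsLayer L) {i j : Fin n} (hij : (i, j) ∈ L) (x : Fin n → Bool) :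
    applyLayer L x i = (x i && x j) := by
  have h : ∃ j', (i, j') ∈ L := ⟨j, hij⟩
  have hj : h.choose = j := congrArg Prod.snd (hL.eq_of_share h.choose_spec hij (Or.inl rfl))
  simp only [applyLayer, dif_pos h, hj]

lemma applyLayer_snd (hL : IsLayer L) {i j : Fin n} (hij : (i, j) ∈ L) (x : Fin n → Bool) :
    applyLayer L x j = (x i || x j) := by
  have h₁ : ¬ ∃ j', (j, j') ∈ L := by
    rintro ⟨j', hj'⟩
    have hji : j = i := congrArg Prod.fst (hL.eq_of_share hj' hij (Or.inr (Or.inl rfl)))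
    exact (hL.1 _ hij).ne hji.symm
  have h₂ : ∃ i', (i', j) ∈ L := ⟨i, hij⟩
  have hi : h₂.choose = i :=
    congrArg Prod.fst (hL.eq_of_share h₂.choose_spec hij (Or.inr (Or.inr (Or.inr rfl))))
  simp only [applyLayer, dif_neg h₁, dif_pos h₂, hi]

lemma applyLayer_of_notMem {k : Fin n} (hk : k ∉ channels L) (x : Fin n → Bool) :
    applyLayer L x k = x k := by
  have h₁ : ¬ ∃ j, (k, j) ∈ L := fun ⟨j, hj⟩ => hk (mem_channels.2 ⟨_, hj, Or.inl rfl⟩)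
  have h₂ : ¬ ∃ i, (i, k) ∈ L := fun ⟨i, hi⟩ => hk (mem_channels.2 ⟨_, hi, Or.inr rfl⟩)
  simp only [applyLayer, dif_neg h₁, dif_neg h₂]

lemma applyLayer_eq_of (hL : IsLayer L) {x y : Fin n → Bool}
    (hfst : ∀ c ∈ L, y c.1 = (x c.1 && x c.2)) (hsnd : ∀ c ∈ L, y c.2 = (x c.1 || x c.2))
    (hfree : ∀ k ∉ channels L, y k = x k) : applyLayer L x = y := by
  funext k
  by_cases hk : k ∈ channels L
  · obtain ⟨c, hc, rfl | rfl⟩ := mem_channels.1 hk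
    · rw [applyLayer_fst hL hc, hfst c hc]
    · rw [applyLayer_snd hL hc, hsnd c hc]
  · rw [applyLayer_of_notMem hk, hfree k hk]

lemma applyLayer_of_le (hL : IsLayer L) {x : Fin n → Bool} (hx : ∀ c ∈ L, x c.1 ≤ x c.2) :
    applyLayer L x = x :=
  applyLayer_eq_of hL (fun c hc => (Bool.and_eq_left_iff_imp.2 (hx c hc)).symm)
    (fun c hc => (Bool.or_eq_right_iff_imp.2 (hx c hc)).symm) (fun _ _ => rfl)

lemma applyNet_cons (L : Finset (Fin n × Fin n)) (N : List (Finset (Fin n × Fin n)))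
    (x : Fin n → Bool) : applyNet (L :: N) x = applyNet N (applyLayer L x) := rfl

lemma IsLayer.notMem_channels (hL : IsLayer L)
    {c : Fin n × Fin n} (hc : c ∈ L) (hL' : L' ⊆ L) (hcL' : c ∉ L') :
    c.1 ∉ channels L' ∧ c.2 ∉ channels L' := by
  have (k : Fin n) (hk : c.1 = k ∨ c.2 = k) : k ∉ channels L' := by
    intro hkL'
    obtain ⟨c', hc', hc'k⟩ := mem_channels.1 hkL'
    obtain rfl := hL.eq_of_share hc (hL' hc') (by grind)
    exact hcL' hc'
  exact ⟨this _ (Or.inl rfl), this _ (Or.inr rfl)⟩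

end Layers

section SwapReversed

variable {n : ℕ} {α : Type*} [LinearOrder α] {L : Finset (Fin n × Fin n)}

noncomputable def swapReversed (L : Finset (Fin n × Fin n)) (f : Fin n → α) (k : Fin n) :
    Fin n :=
  if h : ∃ c ∈ L, f c.2 < f c.1 ∧ (c.1 = k ∨ c.2 = k) then
    if h.choose.1 = k then h.choose.2 else h.choose.1
  else k

lemma swapReversed_of_lt (hL : IsLayer L) {f : Fin n → α} {i j : Fin n} (hij : (i, j) ∈ L)
    (hrev : f j < f i) : swapReversed L f i = j ∧ swapReversed L f j = i := by
  have hchoose : ∀ k, (i = k ∨ j = k) →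
      ∃ h : ∃ c ∈ L, f c.2 < f c.1 ∧ (c.1 = k ∨ c.2 = k), h.choose = (i, j) := by
    intro k hk
    have h : ∃ c ∈ L, f c.2 < f c.1 ∧ (c.1 = k ∨ c.2 = k) := ⟨_, hij, hrev, hk⟩
    obtain ⟨hc, -, hck⟩ := h.choose_spec
    refine ⟨h, hL.eq_of_share hc hij ?_⟩
    rcases hk with rfl | rfl <;> rcases hck with h' | h' <;> simp [h']
  have hne : i ≠ j := (hL.1 _ hij).ne
  obtain ⟨hi, hci⟩ := hchoose i (Or.inl rfl)
  obtain ⟨hj, hcj⟩ := hchoose j (Or.inr rfl)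
  unfold swapReversed
  rw [dif_pos hi, dif_pos hj, hci, hcj]
  simp [hne]

lemma swapReversed_of_not_lt (hL : IsLayer L) {f : Fin n → α} {i j : Fin n} (hij : (i, j) ∈ L)
    (hrev : ¬ f j < f i) : swapReversed L f i = i ∧ swapReversed L f j = j := by
  have hnone : ∀ k, (i = k ∨ j = k) → ¬ ∃ c ∈ L, f c.2 < f c.1 ∧ (c.1 = k ∨ c.2 = k) := by
    rintro k hk ⟨c, hc, hcrev, hck⟩
    obtain rfl : (i, j) = c := hL.eq_of_share hij hc (by grind)
    exact hrev hcrev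
  simp only [swapReversed, dif_neg (hnone i (Or.inl rfl)), dif_neg (hnone j (Or.inr rfl)), and_self]

lemma swapReversed_of_notMem {f : Fin n → α} {k : Fin n} (hk : k ∉ channels L) :
    swapReversed L f k = k :=
  dif_neg fun ⟨c, hc, _, hck⟩ => hk (mem_channels.2 ⟨c, hc, hck⟩)

lemma swapReversed_fst_snd (hL : IsLayer L) (f : Fin n → α) {c : Fin n × Fin n} (hc : c ∈ L) :
    swapReversed L f c.1 = c.1 ∧ swapReversed L f c.2 = c.2 ∨
      swapReversed L f c.1 = c.2 ∧ swapReversed L f c.2 = c.1 := by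
  by_cases hrev : f c.2 < f c.1
  · exact Or.inr (swapReversed_of_lt hL hc hrev)
  · exact Or.inl (swapReversed_of_not_lt hL hc hrev)

lemma swapReversed_le (hL : IsLayer L) (f : Fin n → α) {c : Fin n × Fin n} (hc : c ∈ L) :
    f (swapReversed L f c.1) ≤ f (swapReversed L f c.2) := by
  by_cases hrev : f c.2 < f c.1
  · obtain ⟨h₁, h₂⟩ := swapReversed_of_lt hL hc hrev
    rw [h₁, h₂]
    exact hrev.le
  · obtain ⟨h₁, h₂⟩ := swapReversed_of_not_lt hL hc hrev
    rw [h₁, h₂]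
    exact not_lt.1 hrev

lemma swapReversed_involutive (hL : IsLayer L) (f : Fin n → α) :
    Function.Involutive (swapReversed L f) := by
  intro k
  by_cases hk : k ∈ channels L
  · obtain ⟨c, hc, hck⟩ := mem_channels.1 hk
    rcases swapReversed_fst_snd hL f hc with ⟨h₁, h₂⟩ | ⟨h₁, h₂⟩ <;>
      rcases hck with rfl | rfl <;> simp only [h₁, h₂]
  · rw [swapReversed_of_notMem hk, swapReversed_of_notMem hk]

noncomputable def swapReversedPerm (hL : IsLayer L) (f : Fin n → α) : Equiv.Perm (Fin n) :=
  (swapReversed_involutive hL f).toPerm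

lemma applyLayer_comp_swapReversed (hL : IsLayer L) (f : Fin n → α) (x : Fin n → Bool) :
    applyLayer L (x ∘ swapReversed L f) = applyLayer L x := by
  refine applyLayer_eq_of hL (fun c hc => ?_) (fun c hc => ?_) fun k hk => ?_
  · rw [applyLayer_fst hL hc]
    rcases swapReversed_fst_snd hL f hc with ⟨h₁, h₂⟩ | ⟨h₁, h₂⟩ <;>
      simp only [Function.comp_apply, h₁, h₂, Bool.and_comm]
  · rw [applyLayer_snd hL hc]
    rcases swapReversed_fst_snd hL f hc with ⟨h₁, h₂⟩ | ⟨h₁, h₂⟩ <;>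
      simp only [Function.comp_apply, h₁, h₂, Bool.or_comm]
  · rw [applyLayer_of_notMem hk, Function.comp_apply, swapReversed_of_notMem hk]

lemma applyLayer_eq_comp_swapReversed (hL : IsLayer L) (x : Fin n → Bool) :
    applyLayer L x = x ∘ swapReversed L x := by
  rw [← applyLayer_comp_swapReversed hL x x]
  exact applyLayer_of_le hL fun c hc => swapReversed_le hL x hc

lemma exists_perm_applyNet {N : List (Finset (Fin n × Fin n))} (hN : ∀ L ∈ N, IsLayer L)
    (x : Fin n → Bool) : ∃ ρ : Equiv.Perm (Fin n), applyNet N x = x ∘ ρ := by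
  induction N generalizing x with
  | nil => exact ⟨1, rfl⟩
  | cons L N ih =>
    have hL := hN L List.mem_cons_self
    obtain ⟨ρ, hρ⟩ := ih (fun L' hL' => hN L' (List.mem_cons_of_mem _ hL')) (applyLayer L x)
    refine ⟨ρ.trans (swapReversedPerm hL x), ?_⟩
    rw [applyNet_cons, hρ, applyLayer_eq_comp_swapReversed hL]
    rfl

lemma exists_perm_orienting (hL : IsLayer L) (π : Equiv.Perm (Fin n)) :
    ∃ π' : Equiv.Perm (Fin n), (∀ c ∈ L, π' c.1 < π' c.2) ∧
      ∀ x : Fin n → Bool, applyLayer L (x ∘ π') = applyLayer L (x ∘ π) := by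
  refine ⟨(swapReversedPerm hL π).trans π, fun c hc => ?_, fun x => ?_⟩
  · refine (swapReversed_le hL π hc).lt_of_ne fun h => (hL.1 c hc).ne ?_
    exact ((swapReversedPerm hL π).trans π).injective h
  · exact applyLayer_comp_swapReversed hL π (x ∘ π)

end SwapReversed

section Relabel

variable {n : ℕ} {L : Finset (Fin n × Fin n)}

def relabel (π : Equiv.Perm (Fin n)) (L : Finset (Fin n × Fin n)) : Finset (Fin n × Fin n) :=
  L.image fun c => (π c.1, π c.2)

lemma mem_relabel {π : Equiv.Perm (Fin n)} {c : Fin n × Fin n} (hc : c ∈ L) :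
    (π c.1, π c.2) ∈ relabel π L :=
  Finset.mem_image_of_mem _ hc

lemma relabel_trans (π ρ : Equiv.Perm (Fin n)) (L : Finset (Fin n × Fin n)) :
    relabel (π.trans ρ) L = relabel ρ (relabel π L) := by
  simp only [relabel, Finset.image_image]
  rfl

lemma relabel_insert (π : Equiv.Perm (Fin n)) (c : Fin n × Fin n) (L : Finset (Fin n × Fin n)) :
    relabel π (insert c L) = insert (π c.1, π c.2) (relabel π L) :=
  Finset.image_insert _ _ _

lemma relabel_eq_self {ρ : Equiv.Perm (Fin n)} (h : ∀ k ∈ channels L, ρ k = k) :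
    relabel ρ L = L := by
  conv_rhs => rw [← Finset.image_id (s := L)]
  exact Finset.image_congr fun c hc => Prod.ext (h _ (mem_channels.2 ⟨c, hc, Or.inl rfl⟩))
    (h _ (mem_channels.2 ⟨c, hc, Or.inr rfl⟩))

lemma apply_mem_channels_relabel_iff {π : Equiv.Perm (Fin n)} {k : Fin n} :
    π k ∈ channels (relabel π L) ↔ k ∈ channels L := by
  simp only [mem_channels, relabel, Finset.mem_image, exists_exists_and_eq_and,
    EmbeddingLike.apply_eq_iff_eq]

lemma isLayer_relabel (hL : IsLayer L) {π : Equiv.Perm (Fin n)}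
    (hπ : ∀ c ∈ L, π c.1 < π c.2) : IsLayer (relabel π L) := by
  refine ⟨?_, ?_⟩
  · simp only [relabel, Finset.mem_image, forall_exists_index, and_imp]
    rintro _ c hc rfl
    exact hπ c hc
  · simp only [relabel, Finset.mem_image, ne_eq, forall_exists_index, and_imp]
    rintro _ c hc rfl _ c' hc' rfl hne
    simpa using hL.2 c hc c' hc' fun h => hne (h ▸ rfl)

lemma applyLayer_relabel (hL : IsLayer L) {π : Equiv.Perm (Fin n)}
    (hπ : ∀ c ∈ L, π c.1 < π c.2) (x : Fin n → Bool) :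
    applyLayer (relabel π L) x ∘ π = applyLayer L (x ∘ π) := by
  have hL' := isLayer_relabel hL hπ
  refine (applyLayer_eq_of hL (fun c hc => ?_) (fun c hc => ?_) fun k hk => ?_).symm
  · exact applyLayer_fst hL' (mem_relabel hc) x
  · exact applyLayer_snd hL' (mem_relabel hc) x
  · exact applyLayer_of_notMem (apply_mem_channels_relabel_iff.not.2 hk) x

lemma exists_relabeled_net {N : List (Finset (Fin n × Fin n))} (hN : ∀ L ∈ N, IsLayer L)
    (π : Equiv.Perm (Fin n)) :
    ∃ (C : List (Finset (Fin n × Fin n))) (σ : Equiv.Perm (Fin n)),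
      (∀ L ∈ C, IsLayer L) ∧ C.length = N.length ∧
        ∀ x, applyNet C x = applyNet N (x ∘ π) ∘ σ := by
  induction N generalizing π with
  | nil => exact ⟨[], π.symm, by simp, rfl, fun x => by ext; simp [applyNet]⟩
  | cons L N ih =>
    have hL := hN L List.mem_cons_self
    obtain ⟨π', hπ', hswap⟩ := exists_perm_orienting hL π
    obtain ⟨C, σ, hC, hlen, happ⟩ := ih (fun L' hL' => hN L' (List.mem_cons_of_mem _ hL')) π'
    refine ⟨relabel π' L :: C, σ, ?_, by simp [hlen], fun x => ?_⟩
    · exact List.forall_mem_cons.2 ⟨isLayer_relabel hL hπ', hC⟩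
    · rw [applyNet_cons, happ, applyLayer_relabel hL hπ', hswap, applyNet_cons]

end Relabel

section Sorting

variable {n : ℕ} {N : List (Finset (Fin n × Fin n))}

lemma applyNet_of_monotone (hN : ∀ L ∈ N, IsLayer L) {m : Fin n → Bool} (hm : Monotone m) :
    applyNet N m = m := by
  induction N with
  | nil => rfl
  | cons L N ih =>
    have hL := hN L List.mem_cons_self
    rw [applyNet_cons, applyLayer_of_le hL fun c hc => hm (hL.1 c hc).le]
    exact ih fun L' hL' => hN L' (List.mem_cons_of_mem _ hL')

lemma Sorts.applyNet_comp_perm (hs : Sorts N) (hN : ∀ L ∈ N, IsLayer L) {m : Fin n → Bool}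
    (hm : Monotone m) (π : Equiv.Perm (Fin n)) : applyNet N (m ∘ π) = m := by
  obtain ⟨ρ, hρ⟩ := exists_perm_applyNet hN (m ∘ π)
  have hmono : Monotone (m ∘ ⇑(ρ.trans π)) := hρ ▸ hs (m ∘ π)
  rw [hρ]
  exact Tuple.unique_monotone (τ := 1) hmono hm

lemma eq_one_of_monotone_comp_eq {σ : Equiv.Perm (Fin n)}
    (h : ∀ m : Fin n → Bool, Monotone m → m ∘ σ = m) : σ = 1 := by
  have hthreshold (t : Fin n) : Monotone fun i => decide (t ≤ i) :=
    fun _ _ hij => Bool.le_iff_imp.2 fun hti => decide_eq_true ((of_decide_eq_true hti).trans hij)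
  refine Equiv.ext fun k => le_antisymm ?_ ?_
  · simpa using (congrFun (h _ (hthreshold (σ k))) k).symm
  · simpa using congrFun (h _ (hthreshold k)) k

lemma Sorts.exists_relabel_head {L₁ : Finset (Fin n × Fin n)} (hs : Sorts (L₁ :: N))
    (hN : ∀ L ∈ L₁ :: N, IsLayer L) {π : Equiv.Perm (Fin n)} (hπ : ∀ c ∈ L₁, π c.1 < π c.2) :
    ∃ C : List (Finset (Fin n × Fin n)),
      (∀ L ∈ C, IsLayer L) ∧ C.length = N.length ∧ Sorts (relabel π L₁ :: C) := by
  obtain ⟨hL₁, hN'⟩ := List.forall_mem_cons.1 hN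
  obtain ⟨C, σ, hC, hlen, happ⟩ := exists_relabeled_net hN' π
  have hC' : ∀ L ∈ relabel π L₁ :: C, IsLayer L :=
    List.forall_mem_cons.2 ⟨isLayer_relabel hL₁ hπ, hC⟩
  have happly (x : Fin n → Bool) :
      applyNet (relabel π L₁ :: C) x = applyNet (L₁ :: N) (x ∘ π) ∘ σ := by
    rw [applyNet_cons, happ, applyLayer_relabel hL₁ hπ, applyNet_cons]
  have hσ : σ = 1 := eq_one_of_monotone_comp_eq fun m hm => by
    have := happly m
    rwa [applyNet_of_monotone hC' hm, hs.applyNet_comp_perm hN hm, eq_comm] at this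
  refine ⟨C, hC, hlen, fun x => ?_⟩
  rw [happly, hσ, Equiv.Perm.coe_one, Function.comp_id]
  exact hs (x ∘ π)

end Sorting

section FirstLayer

variable {n : ℕ}

lemma applyLayer_union {L₁ L₂ : Finset (Fin n × Fin n)} (hL : IsLayer (L₁ ∪ L₂))
    (hdisj : Disjoint L₁ L₂) (x : Fin n → Bool) :
    applyLayer (L₁ ∪ L₂) x = applyLayer L₁ (applyLayer L₂ x) := by
  have hL₁ := hL.subset Finset.subset_union_left
  have hL₂ := hL.subset Finset.subset_union_right
  have hfree₂ {c} (hc : c ∈ L₁) := hL.notMem_channels (Finset.mem_union_left _ hc)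
    Finset.subset_union_right (Finset.disjoint_left.1 hdisj hc)
  have hfree₁ {c} (hc : c ∈ L₂) := hL.notMem_channels (Finset.mem_union_right _ hc)
    Finset.subset_union_left (Finset.disjoint_right.1 hdisj hc)
  refine applyLayer_eq_of hL (fun c hc => ?_) (fun c hc => ?_) fun k hk => ?_
  · rcases Finset.mem_union.1 hc with hc | hc
    · rw [applyLayer_fst hL₁ hc, applyLayer_of_notMem (hfree₂ hc).1,
        applyLayer_of_notMem (hfree₂ hc).2]
    · rw [applyLayer_of_notMem (hfree₁ hc).1, applyLayer_fst hL₂ hc]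
  · rcases Finset.mem_union.1 hc with hc | hc
    · rw [applyLayer_snd hL₁ hc, applyLayer_of_notMem (hfree₂ hc).1,
        applyLayer_of_notMem (hfree₂ hc).2]
    · rw [applyLayer_of_notMem (hfree₁ hc).2, applyLayer_snd hL₂ hc]
  · simp only [mem_channels, Finset.mem_union, not_exists, not_and] at hk
    rw [applyLayer_of_notMem, applyLayer_of_notMem] <;>
      simpa [mem_channels] using fun c hc => hk c (by simp [hc])

lemma Sorts.of_subset_head {L₀ L : Finset (Fin n × Fin n)} {N : List (Finset (Fin n × Fin n))}
    (hs : Sorts (L₀ :: N)) (hL : IsLayer L) (h : L₀ ⊆ L) : Sorts (L :: N) := by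
  intro x
  rw [← Finset.union_sdiff_of_subset h] at hL ⊢
  rw [applyNet_cons, applyLayer_union hL Finset.disjoint_sdiff, ← applyNet_cons]
  exact hs _

lemma mem_Fn {a b : Fin n} : (a, b) ∈ Fn n ↔ a.val % 2 = 0 ∧ b.val = a.val + 1 := by
  simp [Fn]

lemma isLayer_Fn : IsLayer (Fn n) := by
  refine ⟨fun c hc => ?_, fun c hc c' hc' hne => ?_⟩
  · have := mem_Fn.1 hc
    rw [Fin.lt_def]
    omega
  · obtain ⟨h₁, h₂⟩ := mem_Fn.1 hc
    obtain ⟨h₁', h₂'⟩ := mem_Fn.1 hc'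
    have : c.1 ≠ c'.1 := fun h => hne (Prod.ext h (Fin.ext (by rw [h₂, h₂', h])))
    simp only [ne_eq, Fin.ext_iff] at this ⊢
    omega

lemma exists_perm_apply_eq_apply_eq {α : Type*} [DecidableEq α] {S : Set α} {v w a b : α}
    (hvw : v ≠ w) (hab : a ≠ b) (hv : v ∉ S) (hw : w ∉ S) (ha : a ∉ S) (hb : b ∉ S) :
    ∃ ρ : Equiv.Perm α, ρ v = a ∧ ρ w = b ∧ ∀ s ∈ S, ρ s = s := by
  refine ⟨(Equiv.swap v a).trans (Equiv.swap (Equiv.swap v a w) b), ?_, ?_, fun s hs => ?_⟩ <;>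
    simp only [Equiv.trans_apply, Equiv.swap_apply_def] <;> grind

lemma exists_mem_Fn_notMem_channels {M : Finset (Fin n × Fin n)} (hM : M ⊆ Fn n)
    {v w : Fin n} (hvw : v ≠ w) (hv : v ∉ channels M) (hw : w ∉ channels M) :
    ∃ a b : Fin n, (a, b) ∈ Fn n ∧ a ∉ channels M ∧ b ∉ channels M := by
  -- `M` is a union of pairs of `Fn n`, so the pair of `Fn n` through a free channel is free.
  have hpair {a b u : Fin n} (hab : (a, b) ∈ Fn n) (hu : a = u ∨ b = u)
      (huM : u ∉ channels M) : a ∉ channels M ∧ b ∉ channels M := by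
    have (k : Fin n) (hk : a = k ∨ b = k) (hkM : k ∈ channels M) : u ∈ channels M := by
      obtain ⟨c, hc, hck⟩ := mem_channels.1 hkM
      obtain rfl : (a, b) = c := isLayer_Fn.eq_of_share hab (hM hc) (by grind)
      exact mem_channels.2 ⟨_, hc, hu⟩
    exact ⟨fun h => huM (this a (Or.inl rfl) h), fun h => huM (this b (Or.inr rfl) h)⟩
  have hslot (u : Fin n) (hu : u.val + 1 < n) : ∃ a b : Fin n, (a, b) ∈ Fn n ∧ (a = u ∨ b = u) :=
    ⟨⟨2 * (u / 2), by omega⟩, ⟨2 * (u / 2) + 1, by omega⟩, mem_Fn.2 ⟨Nat.mul_mod_right 2 _, rfl⟩,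
      by simp only [Fin.ext_iff]; omega⟩
  obtain ⟨u, huM, hu⟩ : ∃ u : Fin n, u ∉ channels M ∧ u.val + 1 < n := by
    by_cases h : v.val + 1 < n
    · exact ⟨v, hv, h⟩
    · exact ⟨w, hw, by have := Fin.val_ne_of_ne hvw; omega⟩
  obtain ⟨a, b, hab, hu'⟩ := hslot u hu
  exact ⟨a, b, hab, hpair hab hu' huM⟩

lemma exists_perm_relabel_subset_Fn {L : Finset (Fin n × Fin n)} (hL : IsLayer L) :
    ∃ π : Equiv.Perm (Fin n), relabel π L ⊆ Fn n := by
  induction L using Finset.induction_on with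
  | empty => exact ⟨1, by simp [relabel]⟩
  | @insert c L hc ih =>
    obtain ⟨π, hπ⟩ := ih (hL.subset (Finset.subset_insert c L))
    obtain ⟨hc₁, hc₂⟩ := hL.notMem_channels (Finset.mem_insert_self c L)
      (Finset.subset_insert c L) hc
    have hv := apply_mem_channels_relabel_iff (π := π).not.2 hc₁
    have hw := apply_mem_channels_relabel_iff (π := π).not.2 hc₂
    have hvw : π c.1 ≠ π c.2 := π.injective.ne (hL.1 c (Finset.mem_insert_self c L)).ne
    obtain ⟨a, b, hab, ha, hb⟩ := exists_mem_Fn_notMem_channels hπ hvw hv hw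
    obtain ⟨ρ, hρv, hρw, hρM⟩ :=
      exists_perm_apply_eq_apply_eq (S := ↑(channels (relabel π L))) hvw
        (isLayer_Fn.1 _ hab).ne hv hw ha hb
    refine ⟨π.trans ρ, ?_⟩
    rw [relabel_trans, relabel_insert, relabel_insert, relabel_eq_self hρM, hρv, hρw]
    exact Finset.insert_subset hab hπ

end FirstLayer

theorem statement16_general (n d : ℕ) (hd : 1 ≤ d)
    (h : ∃ N : List (Finset (Fin n × Fin n)),
      (∀ L ∈ N, IsLayer L) ∧ N.length = d ∧ Sorts N) :
    ∃ C : List (Finset (Fin n × Fin n)),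
      (∀ L ∈ C, IsLayer L) ∧ (Fn n :: C).length = d ∧ Sorts (Fn n :: C) := by
  obtain ⟨_ | ⟨L₁, N⟩, hN, rfl, hs⟩ := h
  · simp at hd
  obtain ⟨π, hπ⟩ := exists_perm_relabel_subset_Fn (hN L₁ List.mem_cons_self)
  have horient : ∀ c ∈ L₁, π c.1 < π c.2 := fun c hc => isLayer_Fn.1 _ (hπ (mem_relabel hc))
  obtain ⟨C, hC, hlen, hsC⟩ := hs.exists_relabel_head hN horient
  exact ⟨C, hC, by simp [hlen], hsC.of_subset_head isLayer_Fn hπ⟩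

/-- Parberry's first-layer lemma.
For `n ≥ 2` and `d ≥ 1`, if there is a sorting network on `n` channels of depth `d`,
then there is one of depth `d` whose first layer is `F_n`. -/
theorem statement16 (n d : ℕ) (hn : 2 ≤ n) (hd : 1 ≤ d)
    (h : ∃ N : List (Finset (Fin n × Fin n)),
      (∀ L ∈ N, IsLayer L) ∧ N.length = d ∧ Sorts N) :
    ∃ C : List (Finset (Fin n × Fin n)),
      (∀ L ∈ C, IsLayer L) ∧ (Fn n :: C).length = d ∧ Sorts (Fn n :: C) :=
  statement16_general n d hd h
end
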